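/- arXiv:2101.00236 — 3 statements merged into one kernel-verified Lean document; each statement's English description precedes it below -/
import Mathlib

section
/- For any matrices U, V ∈ ℝ^{p×r}, we have ‖UUᵀ − VVᵀ‖_F² ≥ 2(√2 − 1)·σ_r(V)²·min_{R ∈ O(r)} ‖U − VR‖_F², where σ_r(V) is the smallest strictly positive singular value of V (assuming V has rank r) and O(r) denotes the set of r×r orthogonal matrices. -/
open Matrix BigOperators Filter Topology

noncomputable def frob {m n : ℕ} (A : Matrix (Fin m) (Fin n) ℝ) : ℝ :=
  Real.sqrt (∑ i, ∑ j, (A i j) ^ 2)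

/-- Orthogonally invariant squared distance `E(U,V) = min_{R ∈ O(r)} ‖U - V R‖_F²`. -/
noncomputable def Edist {p r : ℕ} (U V : Matrix (Fin p) (Fin r) ℝ) : ℝ :=
  ⨅ R : Matrix.orthogonalGroup (Fin r) ℝ, (frob (U - V * (R : Matrix (Fin r) (Fin r) ℝ))) ^ 2

lemma exists_polar {r : ℕ} (M : Matrix (Fin r) (Fin r) ℝ) :
    ∃ R : Matrix (Fin r) (Fin r) ℝ, Rᵀ * R = 1 ∧ R * Rᵀ = 1 ∧
      (M * Rᵀ)ᵀ = M * Rᵀ ∧ ∀ x : Fin r → ℝ, 0 ≤ x ⬝ᵥ ((M * Rᵀ) *ᵥ x) := by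
  classical
  have hH : (Mᵀ * M).IsHermitian := by
    have := Matrix.isHermitian_conjTranspose_mul_self M
    simpa [Matrix.conjTranspose_eq_transpose_of_trivial] using this
  set lam := hH.eigenvalues with hlam
  have hPSD : (Mᵀ * M).PosSemidef := by
    have := Matrix.posSemidef_conjTranspose_mul_self M
    simpa [Matrix.conjTranspose_eq_transpose_of_trivial] using this
  have hlam0 : ∀ i, 0 ≤ lam i := hPSD.eigenvalues_nonneg
  set w : Fin r → EuclideanSpace ℝ (Fin r) := fun i => hH.eigenvectorBasis i with hw
  have key : ∀ i, (Mᵀ * M) *ᵥ ⇑(w i) = lam i • ⇑(w i) := fun i =>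
    hH.mulVec_eigenvectorBasis i
  have hinner : ∀ (x y : EuclideanSpace ℝ (Fin r)), (inner ℝ x y : ℝ) = ∑ k, x k * y k := by
    intro x y
    rw [PiLp.inner_apply]
    simp [RCLike.inner_apply, starRingEnd_apply]
    exact Finset.sum_congr rfl fun k _ => mul_comm _ _
  have hcomp : ∀ (c : OrthonormalBasis (Fin r) ℝ (EuclideanSpace ℝ (Fin r))) (k l : Fin r),
      ∑ i, c i k * c i l = (if k = l then (1:ℝ) else 0) := by
    intro c k l
    have h := c.sum_inner_mul_inner (EuclideanSpace.single k (1:ℝ)) (EuclideanSpace.single l (1:ℝ))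
    simp only [EuclideanSpace.inner_single_left, EuclideanSpace.inner_single_right,
      starRingEnd_apply, star_trivial, one_mul, mul_one] at h
    rw [h]
    simp [EuclideanSpace.single_apply, eq_comm]
  have hwdot : ∀ i j, ∑ k, w i k * w j k = if i = j then 1 else 0 := by
    intro i j
    have h0 := hH.eigenvectorBasis.orthonormal
    rw [orthonormal_iff_ite] at h0
    have h2 := h0 i j
    rw [hinner] at h2
    exact_mod_cast h2
  have hMdot : ∀ i j, (M *ᵥ ⇑(w i)) ⬝ᵥ (M *ᵥ ⇑(w j)) = lam j * (if i = j then 1 else 0) := by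
    intro i j
    have h1 : (M *ᵥ ⇑(w i)) ⬝ᵥ (M *ᵥ ⇑(w j)) = ⇑(w i) ⬝ᵥ ((Mᵀ * M) *ᵥ ⇑(w j)) := by
      rw [← Matrix.mulVec_mulVec, dotProduct_mulVec (⇑(w i)) Mᵀ, Matrix.vecMul_transpose]
    rw [h1, key j, dotProduct_smul, smul_eq_mul, ← hwdot i j]
    rfl
  -- candidate left singular vectors
  set u : Fin r → EuclideanSpace ℝ (Fin r) :=
    fun i => (Real.sqrt (lam i))⁻¹ • ((WithLp.equiv 2 (Fin r → ℝ)).symm (M *ᵥ ⇑(w i))) with hu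
  have hucoe : ∀ i k, u i k = (Real.sqrt (lam i))⁻¹ * (M *ᵥ ⇑(w i)) k := fun i k => rfl
  have horth : Orthonormal ℝ (Set.restrict {i | lam i ≠ 0} u) := by
    rw [orthonormal_iff_ite]
    rintro ⟨i, hi⟩ ⟨j, hj⟩
    rw [hinner]
    have h3 : ∑ k, u i k * u j k
        = (Real.sqrt (lam i))⁻¹ * ((Real.sqrt (lam j))⁻¹ * ((M *ᵥ ⇑(w i)) ⬝ᵥ (M *ᵥ ⇑(w j)))) := by
      simp only [hucoe, dotProduct, Finset.mul_sum]
      exact Finset.sum_congr rfl (fun k _ => by ring)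
    show ∑ k, u i k * u j k = _
    rw [h3, hMdot i j]
    by_cases hij : (i : Fin r) = j
    · subst hij
      have hlpos : 0 < lam i := lt_of_le_of_ne (hlam0 i) (Ne.symm hi)
      have hs : Real.sqrt (lam i) ≠ 0 := ne_of_gt (Real.sqrt_pos.2 hlpos)
      have hss : Real.sqrt (lam i) * Real.sqrt (lam i) = lam i := Real.mul_self_sqrt (hlam0 i)
      simp only [if_pos rfl]
      field_simp
      rw [Real.sq_sqrt (hlam0 i)]
    · have hne : ¬ ((⟨i, hi⟩ : {i | lam i ≠ 0}) = ⟨j, hj⟩) := by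
        simp [Subtype.ext_iff, hij]
      rw [if_neg hij, if_neg hne]; ring
  have hcard : Module.finrank ℝ (EuclideanSpace ℝ (Fin r)) = Fintype.card (Fin r) := by
    simp [finrank_euclideanSpace]
  obtain ⟨b, hb⟩ := horth.exists_orthonormalBasis_extension_of_card_eq hcard
  have hMu : ∀ i k, (M *ᵥ ⇑(w i)) k = Real.sqrt (lam i) * b i k := by
    intro i k
    by_cases hi : lam i ≠ 0
    · have hs : Real.sqrt (lam i) ≠ 0 :=
        ne_of_gt (Real.sqrt_pos.2 (lt_of_le_of_ne (hlam0 i) (Ne.symm hi)))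
      rw [hb i hi]
      show (M *ᵥ ⇑(w i)) k = Real.sqrt (lam i) * ((Real.sqrt (lam i))⁻¹ * (M *ᵥ ⇑(w i)) k)
      field_simp
    · push_neg at hi
      have h0 : (M *ᵥ ⇑(w i)) ⬝ᵥ (M *ᵥ ⇑(w i)) = 0 := by
        rw [hMdot i i, hi]; ring
      rw [dotProduct_self_eq_zero] at h0
      rw [h0, hi]
      simp
  have hbdot : ∀ k l, ∑ i, b i k * b i l = if k = l then (1:ℝ) else 0 := hcomp b
  have hwdot' : ∀ k l, ∑ i, w i k * w i l = if k = l then (1:ℝ) else 0 :=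
    hcomp hH.eigenvectorBasis
  have hbortho : ∀ i j, ∑ m, b i m * b j m = if i = j then (1:ℝ) else 0 := by
    intro i j
    have h0 := b.orthonormal
    rw [orthonormal_iff_ite] at h0
    have h2 := h0 i j
    rw [hinner] at h2
    exact_mod_cast h2
  have hmain : ∀ (f g : Fin r → Fin r → ℝ),
      (∀ i j, ∑ m, f i m * f j m = if i = j then (1:ℝ) else 0) →
      ∀ k l, (∑ m, (∑ i, f i m * g i k) * (∑ j, f j m * g j l)) = ∑ i, g i k * g i l := by
    intro f g hf k l
    have step : ∀ m, (∑ i, f i m * g i k) * (∑ j, f j m * g j l)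
        = ∑ i, ∑ j, (g i k * g j l) * (f i m * f j m) := by
      intro m
      rw [Finset.sum_mul_sum]
      exact Finset.sum_congr rfl fun i _ => Finset.sum_congr rfl fun j _ => by ring
    rw [Finset.sum_congr rfl (fun m _ => step m)]
    rw [Finset.sum_comm]
    refine Finset.sum_congr rfl fun i _ => ?_
    rw [Finset.sum_comm]
    have : ∀ j, (∑ m, (g i k * g j l) * (f i m * f j m))
        = if i = j then g i k * g j l else 0 := by
      intro j
      rw [← Finset.mul_sum, hf i j]
      simp
    rw [Finset.sum_congr rfl (fun j _ => this j)]
    simp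
  set R : Matrix (Fin r) (Fin r) ℝ := Matrix.of fun k l => ∑ i, b i k * w i l with hR
  have hMw : ∀ i k, (∑ m, M k m * w i m) = Real.sqrt (lam i) * b i k := by
    intro i k
    have h2 := hMu i k
    simpa [Matrix.mulVec, dotProduct] using h2
  have hSentry : ∀ k l, (M * Rᵀ) k l = ∑ i, Real.sqrt (lam i) * (b i k * b i l) := by
    intro k l
    have e1 : (M * Rᵀ) k l = ∑ m, M k m * ∑ i, b i l * w i m := by
      simp [Matrix.mul_apply, Matrix.transpose_apply, hR]
    rw [e1]
    have e2 : ∀ m, M k m * ∑ i, b i l * w i m = ∑ i, b i l * (M k m * w i m) := by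
      intro m
      rw [Finset.mul_sum]
      exact Finset.sum_congr rfl fun i _ => by ring
    rw [Finset.sum_congr rfl (fun m _ => e2 m), Finset.sum_comm]
    refine Finset.sum_congr rfl fun i _ => ?_
    rw [← Finset.mul_sum, hMw i k]
    ring
  refine ⟨R, ?_, ?_, ?_, ?_⟩
  · ext k l
    have e1 : (Rᵀ * R) k l = ∑ m, (∑ i, b i m * w i k) * (∑ j, b j m * w j l) := by
      simp [Matrix.mul_apply, Matrix.transpose_apply, hR]
    rw [e1, hmain (fun i m => b i m) (fun i k => w i k) hbortho k l, hwdot' k l]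
    simp [Matrix.one_apply]
  · ext k l
    have e1 : (R * Rᵀ) k l = ∑ m, (∑ i, w i m * b i k) * (∑ j, w j m * b j l) := by
      simp only [Matrix.mul_apply, Matrix.transpose_apply, hR, Matrix.of_apply]
      refine Finset.sum_congr rfl fun m _ => ?_
      congr 1
      · exact Finset.sum_congr rfl fun i _ => by ring
      · exact Finset.sum_congr rfl fun j _ => by ring
    rw [e1, hmain (fun i m => w i m) (fun i k => b i k) hwdot k l, hbdot k l]
    simp [Matrix.one_apply]
  · ext k l
    rw [Matrix.transpose_apply, hSentry k l, hSentry l k]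
    exact Finset.sum_congr rfl fun i _ => by ring
  · intro x
    have e1 : ∀ k, ((M * Rᵀ) *ᵥ x) k
        = ∑ i, Real.sqrt (lam i) * (∑ m, b i m * x m) * b i k := by
      intro k
      have e2 : ((M * Rᵀ) *ᵥ x) k = ∑ l, (M * Rᵀ) k l * x l := by
        simp [Matrix.mulVec, dotProduct]
      rw [e2]
      have e3 : ∀ l, (M * Rᵀ) k l * x l = ∑ i, Real.sqrt (lam i) * b i k * (b i l * x l) := by
        intro l
        rw [hSentry k l, Finset.sum_mul]
        exact Finset.sum_congr rfl fun i _ => by ring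
      rw [Finset.sum_congr rfl (fun l _ => e3 l), Finset.sum_comm]
      refine Finset.sum_congr rfl fun i _ => ?_
      rw [← Finset.mul_sum]
      ring
    have e4 : x ⬝ᵥ ((M * Rᵀ) *ᵥ x) = ∑ i, Real.sqrt (lam i) * (∑ m, b i m * x m) ^ 2 := by
      rw [dotProduct]
      rw [Finset.sum_congr rfl (fun k (_ : k ∈ Finset.univ) => by rw [e1 k])]
      have e5 : ∀ k, x k * ∑ i, Real.sqrt (lam i) * (∑ m, b i m * x m) * b i k
          = ∑ i, Real.sqrt (lam i) * (∑ m, b i m * x m) * (b i k * x k) := by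
        intro k
        rw [Finset.mul_sum]
        exact Finset.sum_congr rfl fun i _ => by ring
      rw [Finset.sum_congr rfl (fun k _ => e5 k), Finset.sum_comm]
      refine Finset.sum_congr rfl fun i _ => ?_
      rw [← Finset.mul_sum]
      ring
    rw [e4]
    exact Finset.sum_nonneg fun i _ =>
      mul_nonneg (Real.sqrt_nonneg _) (sq_nonneg _)

lemma trace_tAA {m n : ℕ} (A : Matrix (Fin m) (Fin n) ℝ) :
    Matrix.trace (Aᵀ * A) = ∑ i, ∑ j, (A i j) ^ 2 := by
  rw [Matrix.trace]
  simp only [Matrix.diag, Matrix.mul_apply, Matrix.transpose_apply]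
  rw [Finset.sum_comm]
  exact Finset.sum_congr rfl fun i _ => Finset.sum_congr rfl fun j _ => (sq (A i j)).symm ▸ (sq (A i j)) ▸ rfl

lemma trace_tAA_nonneg {m n : ℕ} (A : Matrix (Fin m) (Fin n) ℝ) :
    0 ≤ Matrix.trace (Aᵀ * A) := by
  rw [trace_tAA]
  exact Finset.sum_nonneg fun i _ => Finset.sum_nonneg fun j _ => sq_nonneg _

noncomputable def frob' {m n : ℕ} (A : Matrix (Fin m) (Fin n) ℝ) : ℝ :=
  Real.sqrt (∑ i, ∑ j, (A i j) ^ 2)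

lemma frob'_sq {m n : ℕ} (A : Matrix (Fin m) (Fin n) ℝ) :
    frob' A ^ 2 = Matrix.trace (Aᵀ * A) := by
  rw [frob', Real.sq_sqrt (Finset.sum_nonneg fun i _ => Finset.sum_nonneg fun j _ => sq_nonneg (A i j)),
    trace_tAA]

lemma cyc4 {p r : ℕ} (A C : Matrix (Fin p) (Fin r) ℝ) (B D2 : Matrix (Fin r) (Fin p) ℝ) :
    Matrix.trace (A * B * (C * D2)) = Matrix.trace ((B * C) * (D2 * A)) := by
  rw [Matrix.trace_mul_comm (A*B) (C*D2), Matrix.mul_assoc C D2 (A*B), ← Matrix.mul_assoc D2 A B,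
    Matrix.trace_mul_comm C (D2*A*B), Matrix.mul_assoc (D2*A) B C, Matrix.trace_mul_comm]

/-- Lemma 5.4 of Tu et al.: for any `U V : ℝ^{p×r}` with `V` of rank `r` and smallest
singular value `σ` (pinned via `σ² = λ_min(VᵀV)`, i.e. the greatest `c` with
`c‖x‖² ≤ ‖Vx‖²` for all `x`), one has
`‖UUᵀ − VVᵀ‖_F² ≥ 2(√2 − 1) σ² E(U,V)`. -/
theorem stmt_0 {p r : ℕ} (U V : Matrix (Fin p) (Fin r) ℝ) (σ : ℝ)
    (hrank : V.rank = r) (hσpos : 0 < σ)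
    (hσ : IsGreatest
      {c : ℝ | ∀ x : Fin r → ℝ, c * (∑ j, (x j) ^ 2) ≤ ∑ i, (V.mulVec x i) ^ 2} (σ ^ 2)) :
    (frob (U * Uᵀ - V * Vᵀ)) ^ 2 ≥ 2 * (Real.sqrt 2 - 1) * σ ^ 2 * Edist U V := by
  classical
  obtain ⟨R, hRtR, hRRt, hSsym, hSpsd⟩ := exists_polar (Vᵀ * U)
  set Δ : Matrix (Fin p) (Fin r) ℝ := U * Rᵀ - V with hΔ
  have hU' : U * Rᵀ = V + Δ := by rw [hΔ, add_sub_cancel]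
  set S : Matrix (Fin r) (Fin r) ℝ := (Vᵀ * U) * Rᵀ with hS
  set G : Matrix (Fin r) (Fin r) ℝ := Vᵀ * V with hG
  set P : Matrix (Fin r) (Fin r) ℝ := S - G with hP
  set D : Matrix (Fin r) (Fin r) ℝ := Δᵀ * Δ with hD
  have hGt : Gᵀ = G := by rw [hG, Matrix.transpose_mul, Matrix.transpose_transpose]
  have hPt : Pᵀ = P := by rw [hP, Matrix.transpose_sub, hSsym, hGt]
  have hDt : Dᵀ = D := by rw [hD, Matrix.transpose_mul, Matrix.transpose_transpose]
  have hVd : Vᵀ * Δ = P := by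
    rw [hΔ, Matrix.mul_sub, ← Matrix.mul_assoc, hP, hG]
  have hdV : Δᵀ * V = P := by
    have : Δᵀ * V = (Vᵀ * Δ)ᵀ := by
      rw [Matrix.transpose_mul, Matrix.transpose_transpose]
    rw [this, hVd, hPt]
  -- the difference matrix
  have hX : U * Uᵀ - V * Vᵀ = Δ * Vᵀ + (V * Δᵀ + Δ * Δᵀ) := by
    have h1 : U * Uᵀ = (U * Rᵀ) * (U * Rᵀ)ᵀ := by
      rw [Matrix.transpose_mul, Matrix.transpose_transpose, Matrix.mul_assoc,
        ← Matrix.mul_assoc Rᵀ R Uᵀ, hRtR, Matrix.one_mul]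
    rw [h1, hU', Matrix.transpose_add, Matrix.add_mul, Matrix.mul_add, Matrix.mul_add]
    abel
  -- scalar abbreviations
  set a : ℝ := Matrix.trace (D * D) with ha
  set bb : ℝ := Matrix.trace (P * P) with hbb
  set c : ℝ := Matrix.trace (P * D) with hc
  set g : ℝ := Matrix.trace (G * D) with hg
  set s : ℝ := Matrix.trace (S * D) with hs
  -- identity 1 : trace of the square of the difference
  have hXsym : (U * Uᵀ - V * Vᵀ)ᵀ = U * Uᵀ - V * Vᵀ := by
    rw [Matrix.transpose_sub, Matrix.transpose_mul, Matrix.transpose_mul,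
      Matrix.transpose_transpose, Matrix.transpose_transpose]
  have hId1 : Matrix.trace ((U * Uᵀ - V * Vᵀ)ᵀ * (U * Uᵀ - V * Vᵀ))
      = a + 2 * bb + 2 * g + 4 * c := by
    rw [hXsym, hX]
    simp only [Matrix.add_mul, Matrix.mul_add, Matrix.trace_add]
    rw [cyc4 Δ Δ Vᵀ Vᵀ, cyc4 Δ V Vᵀ Δᵀ, cyc4 Δ Δ Vᵀ Δᵀ, cyc4 V Δ Δᵀ Vᵀ, cyc4 V V Δᵀ Δᵀ,
      cyc4 V Δ Δᵀ Δᵀ, cyc4 Δ Δ Δᵀ Vᵀ, cyc4 Δ V Δᵀ Δᵀ, cyc4 Δ Δ Δᵀ Δᵀ]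
    rw [hVd, hdV, ← hG, ← hD]
    rw [Matrix.trace_mul_comm D G, Matrix.trace_mul_comm D P]
    ring
  -- identity 2 : the square term
  set K : Matrix (Fin r) (Fin r) ℝ := D + Real.sqrt 2 • P with hK
  have hKt : Kᵀ = K := by rw [hK, Matrix.transpose_add, Matrix.transpose_smul, hPt, hDt]
  have hsqrt2 : Real.sqrt 2 * Real.sqrt 2 = 2 := Real.mul_self_sqrt (by norm_num)
  have h1le : (1:ℝ) ≤ Real.sqrt 2 := by nlinarith [Real.sqrt_nonneg 2]
  have hle2 : Real.sqrt 2 ≤ 2 := by nlinarith [Real.sqrt_nonneg 2]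
  have hKK : Matrix.trace (K * K) = a + 2 * Real.sqrt 2 * c + 2 * bb := by
    rw [hK]
    rw [Matrix.add_mul, Matrix.mul_add, Matrix.mul_add, Matrix.smul_mul, Matrix.smul_mul,
      Matrix.mul_smul, Matrix.mul_smul]
    simp only [Matrix.trace_add, Matrix.trace_smul, smul_smul, smul_eq_mul]
    rw [Matrix.trace_mul_comm D P, hsqrt2, ← ha, ← hbb, ← hc]
    ring
  have hK0 : 0 ≤ Matrix.trace (K * K) := by
    have := trace_tAA_nonneg K
    rwa [hKt] at this
  -- trace (S * D) is nonnegative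
  have hs0 : 0 ≤ s := by
    have e : s = ∑ j, ∑ k, Δ j k * (∑ l, S k l * Δ j l) := by
      rw [hs, hD, Matrix.trace]
      simp only [Matrix.diag, Matrix.mul_apply, Matrix.transpose_apply]
      have e1 : ∀ k l : Fin r, S k l * (∑ j, Δ j l * Δ j k) = ∑ j, S k l * Δ j l * Δ j k := by
        intro k l; rw [Finset.mul_sum]; exact Finset.sum_congr rfl fun j _ => by ring
      calc ∑ k, ∑ l, S k l * ∑ j, Δ j l * Δ j k
          = ∑ k, ∑ l, ∑ j, S k l * Δ j l * Δ j k := by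
            exact Finset.sum_congr rfl fun k _ => Finset.sum_congr rfl fun l _ => e1 k l
        _ = ∑ k, ∑ j, ∑ l, S k l * Δ j l * Δ j k := by
            exact Finset.sum_congr rfl fun k _ => Finset.sum_comm
        _ = ∑ j, ∑ k, ∑ l, S k l * Δ j l * Δ j k := Finset.sum_comm
        _ = ∑ j, ∑ k, Δ j k * (∑ l, S k l * Δ j l) := by
            refine Finset.sum_congr rfl fun j _ => Finset.sum_congr rfl fun k _ => ?_
            rw [Finset.mul_sum]
            exact Finset.sum_congr rfl fun l _ => by ring
    rw [e]
    refine Finset.sum_nonneg fun j _ => ?_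
    have := hSpsd (fun k => Δ j k)
    simpa [dotProduct, Matrix.mulVec] using this
  -- trace (G * D) dominates σ² ‖Δ‖²
  have hGD : g = ∑ j, ∑ i, (V.mulVec (fun k => Δ j k) i) ^ 2 := by
    have e1 : g = Matrix.trace (Δ * Vᵀ * (V * Δᵀ)) := by
      rw [hg, cyc4 Δ V Vᵀ Δᵀ, ← hG, ← hD, Matrix.trace_mul_comm]
    have e2 : Δ * Vᵀ * (V * Δᵀ) = (V * Δᵀ)ᵀ * (V * Δᵀ) := by
      rw [Matrix.transpose_mul, Matrix.transpose_transpose]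
    rw [e1, e2, trace_tAA]
    rw [Finset.sum_comm]
    refine Finset.sum_congr rfl fun j _ => Finset.sum_congr rfl fun i _ => ?_
    have e4 : (V * Δᵀ) i j = V.mulVec (fun k => Δ j k) i := by
      simp [Matrix.mul_apply, Matrix.mulVec, dotProduct]
    rw [e4]
  have hF2 : frob Δ ^ 2 = Matrix.trace D := by
    show frob' Δ ^ 2 = _
    rw [frob'_sq, ← hD]
  have hg_ge : σ ^ 2 * frob Δ ^ 2 ≤ g := by
    rw [hGD, hF2, hD, trace_tAA]
    rw [Finset.mul_sum]
    exact Finset.sum_le_sum fun j _ => hσ.1 (fun k => Δ j k)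
  -- Edist is at most ‖Δ‖²
  have hRmem : R ∈ Matrix.orthogonalGroup (Fin r) ℝ := by
    rw [Matrix.mem_unitaryGroup_iff]
    rw [Matrix.star_eq_conjTranspose, Matrix.conjTranspose_eq_transpose_of_trivial]
    exact hRRt
  have hEd : Edist U V ≤ frob Δ ^ 2 := by
    have hbdd : BddBelow (Set.range fun R0 : Matrix.orthogonalGroup (Fin r) ℝ =>
        (frob (U - V * (R0 : Matrix (Fin r) (Fin r) ℝ))) ^ 2) := by
      refine ⟨0, ?_⟩
      rintro x ⟨R0, rfl⟩
      positivity
    have h1 := ciInf_le hbdd (⟨R, hRmem⟩ : Matrix.orthogonalGroup (Fin r) ℝ)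
    refine le_trans h1 (le_of_eq ?_)
    have hΔeq : Δ = (U - V * R) * Rᵀ := by
      rw [Matrix.sub_mul, Matrix.mul_assoc, hRRt, Matrix.mul_one, hΔ]
    have htr : Matrix.trace (Δᵀ * Δ) = Matrix.trace ((U - V * R)ᵀ * (U - V * R)) := by
      rw [hΔeq, Matrix.transpose_mul, Matrix.transpose_transpose, Matrix.trace_mul_comm,
        Matrix.mul_assoc (U - V * R) Rᵀ _, ← Matrix.mul_assoc Rᵀ R _, hRtR, Matrix.one_mul,
        Matrix.trace_mul_comm]
    have e3 : frob (U - V * R) ^ 2 = frob Δ ^ 2 := by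
      show frob' (U - V * R) ^ 2 = frob' Δ ^ 2
      rw [frob'_sq, frob'_sq, htr]
    exact e3
  -- final arithmetic
  have hLHS : frob (U * Uᵀ - V * Vᵀ) ^ 2 = a + 2 * bb + 2 * g + 4 * c := by
    show frob' (U * Uᵀ - V * Vᵀ) ^ 2 = _
    rw [frob'_sq, hId1]
  have hcsg : c = s - g := by
    rw [hc, hP, Matrix.sub_mul, Matrix.trace_sub, hs, hg]
  have hchain : (2 * Real.sqrt 2 - 2) * g ≤ a + 2 * bb + 2 * g + 4 * c := by
    have hKK' : a + 2 * bb + 2 * g + 4 * c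
        = Matrix.trace (K * K) + (4 - 2 * Real.sqrt 2) * s + (2 * Real.sqrt 2 - 2) * g := by
      rw [hKK, hcsg]; ring
    have h4s : 0 ≤ (4 - 2 * Real.sqrt 2) * s := mul_nonneg (by linarith) hs0
    linarith [hK0, h4s]
  have hconst : 0 ≤ 2 * (Real.sqrt 2 - 1) * σ ^ 2 :=
    mul_nonneg (by linarith) (sq_nonneg σ)
  have hfinal : 2 * (Real.sqrt 2 - 1) * σ ^ 2 * Edist U V
      ≤ 2 * (Real.sqrt 2 - 1) * σ ^ 2 * frob Δ ^ 2 :=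
    mul_le_mul_of_nonneg_left hEd hconst
  rw [ge_iff_le, hLHS]
  calc 2 * (Real.sqrt 2 - 1) * σ ^ 2 * Edist U V
      ≤ 2 * (Real.sqrt 2 - 1) * σ ^ 2 * frob Δ ^ 2 := hfinal
    _ = (2 * Real.sqrt 2 - 2) * (σ ^ 2 * frob Δ ^ 2) := by ring
    _ ≤ (2 * Real.sqrt 2 - 2) * g := by
        apply mul_le_mul_of_nonneg_left hg_ge
        linarith
    _ ≤ a + 2 * bb + 2 * g + 4 * c := hchain
end

section
/- Let U ∈ ℝ^{p×r}, X = UUᵀ, and let U* ∈ ℝ^{p×r} with X* = U*(U*)ᵀ having rank r. If min_{R ∈ O(r)} ‖U − U*R‖_F² ≤ γ·σ_r(X*) for some constant 0 < γ < 1, then σ_r(X) ≥ (1 − √γ)²·σ_r(X*). -/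
open Matrix BigOperators Filter Topology

lemma cauchy_mulVec {m n : ℕ} (A : Matrix (Fin m) (Fin n) ℝ) (x : Fin n → ℝ) :
    ∑ i, (A.mulVec x i) ^ 2 ≤ (∑ i, ∑ j, (A i j) ^ 2) * (∑ j, (x j) ^ 2) := by
  rw [Finset.sum_mul]
  apply Finset.sum_le_sum
  intro i _
  simpa [Matrix.mulVec, dotProduct] using
    Finset.sum_mul_sq_le_sq_mul_sq Finset.univ (fun j => A i j) x

lemma sqrt_mulVec_le {m n : ℕ} (A : Matrix (Fin m) (Fin n) ℝ) (x : Fin n → ℝ) :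
    Real.sqrt (∑ i, (A.mulVec x i) ^ 2) ≤ frob A * Real.sqrt (∑ j, (x j) ^ 2) := by
  rw [frob, ← Real.sqrt_mul (by positivity)]
  exact Real.sqrt_le_sqrt (cauchy_mulVec A x)

lemma sqrt_sum_add_le {n : ℕ} (v w : Fin n → ℝ) :
    Real.sqrt (∑ i, (v i + w i) ^ 2) ≤
      Real.sqrt (∑ i, (v i) ^ 2) + Real.sqrt (∑ i, (w i) ^ 2) := by
  have h := norm_add_le ((WithLp.equiv 2 (Fin n → ℝ)).symm v) ((WithLp.equiv 2 (Fin n → ℝ)).symm w)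
  simp only [EuclideanSpace.norm_eq] at h
  have e1 : ∀ (u : Fin n → ℝ) (i : Fin n),
      ‖((WithLp.equiv 2 (Fin n → ℝ)).symm u) i‖ ^ 2 = u i ^ 2 := by
    intro u i; rw [Real.norm_eq_abs, sq_abs]; rfl
  have e2 : ∀ i, ‖(((WithLp.equiv 2 (Fin n → ℝ)).symm v) +
      ((WithLp.equiv 2 (Fin n → ℝ)).symm w)) i‖ ^ 2 = (v i + w i) ^ 2 := by
    intro i; rw [Real.norm_eq_abs, sq_abs]; rfl
  simp only [e1, e2] at h
  exact h

lemma orth_mulVec_norm {r : ℕ} (R : Matrix.orthogonalGroup (Fin r) ℝ) (x : Fin r → ℝ) :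
    ∑ i, ((R : Matrix (Fin r) (Fin r) ℝ).mulVec x i) ^ 2 = ∑ j, (x j) ^ 2 := by
  have hR : (R : Matrix (Fin r) (Fin r) ℝ)ᵀ * (R : Matrix (Fin r) (Fin r) ℝ) = 1 := by
    have := (Matrix.mem_orthogonalGroup_iff' (Fin r) ℝ).mp R.2
    simpa [Matrix.star_eq_conjTranspose] using this
  set A := (R : Matrix (Fin r) (Fin r) ℝ)
  have h1 : ∑ i, (A.mulVec x i) ^ 2 = (A.mulVec x) ⬝ᵥ (A.mulVec x) := by
    simp [dotProduct, sq]
  have h2 : (A.mulVec x) ⬝ᵥ (A.mulVec x) = ((A.mulVec x) ᵥ* A) ⬝ᵥ x :=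
    Matrix.dotProduct_mulVec _ _ _
  have h3 : (A.mulVec x) ᵥ* A = (Aᵀ * A).mulVec x := by
    rw [← Matrix.mulVec_transpose, Matrix.mulVec_mulVec]
  rw [h1, h2, h3, hR, Matrix.one_mulVec]
  simp [dotProduct, sq]

/-- If `E(U,U*) ≤ γ σ_r(X*)` with `0 < γ < 1`, where `X* = U*(U*)ᵀ` has rank `r` and
`σ_r(X*) = λ_min((U*)ᵀU*)` (pinned as the greatest `c` with `c‖x‖² ≤ ‖U* x‖²`),
then `σ_r(X) ≥ (1 − √γ)² σ_r(X*)` for `X = UUᵀ`, expressed as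
`(1−√γ)² σ_r(X*) ‖x‖² ≤ ‖U x‖²` for all `x` (i.e. a lower bound on `λ_min(UᵀU) = σ_r(X)`). -/
theorem stmt_1 {p r : ℕ} (U Ustar : Matrix (Fin p) (Fin r) ℝ) (γ σstar : ℝ)
    (hγ0 : 0 < γ) (hγ1 : γ < 1)
    (hrank : (Ustar * Ustarᵀ).rank = r)
    (hσ : IsGreatest
      {c : ℝ | ∀ x : Fin r → ℝ, c * (∑ j, (x j) ^ 2) ≤ ∑ i, (Ustar.mulVec x i) ^ 2} σstar)
    (hE : Edist U Ustar ≤ γ * σstar) :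
    ∀ x : Fin r → ℝ,
      (1 - Real.sqrt γ) ^ 2 * σstar * (∑ j, (x j) ^ 2) ≤ ∑ i, (U.mulVec x i) ^ 2 := by
  intro x
  have hσ0 : 0 ≤ σstar := by
    have h0 : (0 : ℝ) ∈ {c : ℝ | ∀ x : Fin r → ℝ,
        c * (∑ j, (x j) ^ 2) ≤ ∑ i, (Ustar.mulVec x i) ^ 2} := by
      intro y; simp; positivity
    exact hσ.2 h0
  set s := Real.sqrt (∑ j, (x j) ^ 2) with hs_def
  set a := Real.sqrt (∑ i, (U.mulVec x i) ^ 2) with ha_def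
  have hs_sq : s ^ 2 = ∑ j, (x j) ^ 2 := Real.sq_sqrt (by positivity)
  have ha_sq : a ^ 2 = ∑ i, (U.mulVec x i) ^ 2 := Real.sq_sqrt (by positivity)
  have hs_nn : 0 ≤ s := Real.sqrt_nonneg _
  have ha_nn : 0 ≤ a := Real.sqrt_nonneg _
  have hsg : Real.sqrt γ < 1 := by
    rw [show (1:ℝ) = Real.sqrt 1 by simp]
    exact Real.sqrt_lt_sqrt hγ0.le hγ1
  have hsg0 : (0:ℝ) ≤ 1 - Real.sqrt γ := by linarith
  rcases eq_or_lt_of_le hs_nn with h0 | hs_pos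
  · -- s = 0
    have : (∑ j, (x j) ^ 2) = 0 := by rw [← hs_sq, ← h0]; ring
    rw [this, mul_zero]
    positivity
  -- key: for all R, √σstar * s ≤ a + frob (U - Ustar * R) * s
  have key : ∀ R : Matrix.orthogonalGroup (Fin r) ℝ,
      Real.sqrt σstar * s ≤ a + frob (U - Ustar * (R : Matrix (Fin r) (Fin r) ℝ)) * s := by
    intro R
    set A := (R : Matrix (Fin r) (Fin r) ℝ)
    have h1 : Real.sqrt σstar * s ≤ Real.sqrt (∑ i, ((Ustar * A).mulVec x i) ^ 2) := by
      rw [← Real.sqrt_mul hσ0]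
      apply Real.sqrt_le_sqrt
      have h := hσ.1 (A.mulVec x)
      rw [orth_mulVec_norm R x] at h
      simpa [Matrix.mulVec_mulVec] using h
    have h2 : Real.sqrt (∑ i, ((Ustar * A).mulVec x i) ^ 2) ≤
        a + frob (U - Ustar * A) * s := by
      have hdecomp : ∀ i, (Ustar * A).mulVec x i =
          U.mulVec x i + ((Ustar * A - U).mulVec x) i := by
        intro i; simp [Matrix.sub_mulVec]
      calc Real.sqrt (∑ i, ((Ustar * A).mulVec x i) ^ 2)
          = Real.sqrt (∑ i, (U.mulVec x i + ((Ustar * A - U).mulVec x) i) ^ 2) := by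
            congr 1; exact Finset.sum_congr rfl fun i _ => by rw [hdecomp i]
        _ ≤ a + Real.sqrt (∑ i, ((Ustar * A - U).mulVec x i) ^ 2) :=
            sqrt_sum_add_le _ _
        _ ≤ a + frob (Ustar * A - U) * s := by
            have := sqrt_mulVec_le (Ustar * A - U) x
            linarith
        _ = a + frob (U - Ustar * A) * s := by
            congr 2
            unfold frob
            congr 1
            apply Finset.sum_congr rfl; intro i _
            apply Finset.sum_congr rfl; intro j _
            have : (Ustar * A - U) i j = -((U - Ustar * A) i j) := by
              simp [Matrix.sub_apply]
            rw [this, neg_sq]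
    linarith
  -- either a already big, or use Edist bound
  by_cases hcase : Real.sqrt σstar * s ≤ a
  · -- then σstar * s² ≤ a²; and (1-√γ)² ≤ 1
    have h1 : σstar * s ^ 2 ≤ a ^ 2 := by
      have := pow_le_pow_left₀ (by positivity) hcase 2
      calc σstar * s ^ 2 = (Real.sqrt σstar * s) ^ 2 := by
            rw [mul_pow, Real.sq_sqrt hσ0]
        _ ≤ a ^ 2 := this
    have h2 : (1 - Real.sqrt γ) ^ 2 ≤ 1 := by nlinarith [Real.sqrt_nonneg γ, hsg]
    rw [← hs_sq, ← ha_sq]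
    nlinarith [mul_nonneg hσ0 (sq_nonneg s)]
  · push_neg at hcase
    set t := (Real.sqrt σstar * s - a) / s with ht_def
    have ht_pos : 0 < t := div_pos (by linarith) hs_pos
    have ht_le : ∀ R : Matrix.orthogonalGroup (Fin r) ℝ,
        t ^ 2 ≤ (frob (U - Ustar * (R : Matrix (Fin r) (Fin r) ℝ))) ^ 2 := by
      intro R
      have h := key R
      have hf : t ≤ frob (U - Ustar * (R : Matrix (Fin r) (Fin r) ℝ)) := by
        rw [ht_def, div_le_iff₀ hs_pos]
        linarith [h]
      exact pow_le_pow_left₀ ht_pos.le hf 2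
    have hEt : t ^ 2 ≤ γ * σstar := le_trans (le_ciInf ht_le) hE
    have ht_sqrt : t ≤ Real.sqrt γ * Real.sqrt σstar := by
      calc t = Real.sqrt (t ^ 2) := (Real.sqrt_sq ht_pos.le).symm
        _ ≤ Real.sqrt (γ * σstar) := Real.sqrt_le_sqrt hEt
        _ = Real.sqrt γ * Real.sqrt σstar := Real.sqrt_mul hγ0.le _
    have hts : Real.sqrt σstar * s - a = t * s := by
      rw [ht_def, div_mul_cancel₀ _ hs_pos.ne']
    have hab : (1 - Real.sqrt γ) * (Real.sqrt σstar * s) ≤ a := by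
      have h := mul_le_mul_of_nonneg_right ht_sqrt hs_nn
      nlinarith [hts]
    have hb0 : 0 ≤ (1 - Real.sqrt γ) * (Real.sqrt σstar * s) :=
      mul_nonneg hsg0 (mul_nonneg (Real.sqrt_nonneg _) hs_nn)
    have hsq := pow_le_pow_left₀ hb0 hab 2
    rw [← hs_sq, ← ha_sq]
    calc (1 - Real.sqrt γ) ^ 2 * σstar * s ^ 2
        = ((1 - Real.sqrt γ) * (Real.sqrt σstar * s)) ^ 2 := by
          rw [mul_pow, mul_pow, Real.sq_sqrt hσ0]; ring
      _ ≤ a ^ 2 := hsq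
end

section
/- Let U, U* ∈ ℝ^{p×r}, X = UUᵀ, X* = U*(U*)ᵀ. If E(U,U*) := min_{R ∈ O(r)} ‖U − U*R‖_F² ≤ γ·σ_r(X*) for some 0 < γ < 1, then ‖X − X*‖_F ≤ (2 + √γ)·‖U*‖₂·E(U,U*)^{1/2} ≤ (2√γ + γ)·τ(U*)·σ_r(X*), where τ(U*) = σ₁(U*)/σ_r(U*) and ‖U*‖₂ = σ₁(U*). -/
open Matrix BigOperators Filter Topology

lemma frob_nonneg {m n : ℕ} (A : Matrix (Fin m) (Fin n) ℝ) : 0 ≤ frob A :=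
  Real.sqrt_nonneg _

lemma frob_transpose {m n : ℕ} (A : Matrix (Fin m) (Fin n) ℝ) : frob Aᵀ = frob A := by
  rw [frob, frob, Finset.sum_comm]
  rfl

lemma frob_eq_norm {m n : ℕ} (A : Matrix (Fin m) (Fin n) ℝ) :
    frob A = ‖((WithLp.equiv 2 (Fin m × Fin n → ℝ)).symm fun q => A q.1 q.2)‖ := by
  rw [EuclideanSpace.norm_eq, frob, Fintype.sum_prod_type]
  simp [sq_abs]

lemma frob_add_le {m n : ℕ} (A B : Matrix (Fin m) (Fin n) ℝ) :
    frob (A + B) ≤ frob A + frob B := by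
  rw [frob_eq_norm, frob_eq_norm, frob_eq_norm]
  exact le_trans (le_of_eq (by congr 1)) (norm_add_le _ _)

lemma frob_mul_le {m n k : ℕ} (A : Matrix (Fin m) (Fin n) ℝ) (B : Matrix (Fin n) (Fin k) ℝ) :
    frob (A * B) ≤ frob A * frob B := by
  have h : ∑ i, ∑ j, ((A * B) i j) ^ 2 ≤ (∑ i, ∑ j, (A i j) ^ 2) * (∑ i, ∑ j, (B i j) ^ 2) := by
    have h1 : ∀ (i : Fin m) (j : Fin k), ((A * B) i j) ^ 2 ≤
        (∑ t, (A i t) ^ 2) * (∑ t, (B t j) ^ 2) := by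
      intro i j
      simpa [Matrix.mul_apply] using
        Finset.sum_mul_sq_le_sq_mul_sq Finset.univ (fun t => A i t) (fun t => B t j)
    calc ∑ i, ∑ j, ((A * B) i j) ^ 2
        ≤ ∑ i, ∑ j, (∑ t, (A i t) ^ 2) * (∑ t, (B t j) ^ 2) := by
          gcongr with i _ j _; exact h1 i j
      _ = (∑ i, ∑ t, (A i t) ^ 2) * (∑ j, ∑ t, (B t j) ^ 2) := by
          rw [Finset.sum_mul_sum]
      _ = (∑ i, ∑ j, (A i j) ^ 2) * (∑ i, ∑ j, (B i j) ^ 2) := by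
          rw [Finset.sum_comm (s := Finset.univ) (t := Finset.univ)
            (f := fun j t => (B t j) ^ 2)]
  calc frob (A * B) = Real.sqrt (∑ i, ∑ j, ((A * B) i j) ^ 2) := rfl
    _ ≤ Real.sqrt ((∑ i, ∑ j, (A i j) ^ 2) * (∑ i, ∑ j, (B i j) ^ 2)) := Real.sqrt_le_sqrt h
    _ = frob A * frob B := by rw [Real.sqrt_mul (by positivity)]; rfl

lemma frob_op_mul_le {p m r : ℕ} (V : Matrix (Fin p) (Fin r) ℝ) (Δ : Matrix (Fin m) (Fin r) ℝ)
    (c : ℝ) (hc : 0 ≤ c)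
    (hV : ∀ x : Fin r → ℝ, ∑ i, (V.mulVec x i) ^ 2 ≤ c ^ 2 * ∑ j, (x j) ^ 2) :
    frob (V * Δᵀ) ≤ c * frob Δ := by
  have h : ∑ i, ∑ j, ((V * Δᵀ) i j) ^ 2 ≤ c ^ 2 * ∑ i, ∑ j, (Δ i j) ^ 2 := by
    rw [Finset.sum_comm]
    calc ∑ j, ∑ i, ((V * Δᵀ) i j) ^ 2 = ∑ j, ∑ i, (V.mulVec (fun k => Δ j k) i) ^ 2 := by
          simp [Matrix.mul_apply, Matrix.mulVec, dotProduct, Matrix.transpose_apply]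
      _ ≤ ∑ j, c ^ 2 * ∑ k, (Δ j k) ^ 2 := Finset.sum_le_sum fun j _ => hV _
      _ = c ^ 2 * ∑ j, ∑ k, (Δ j k) ^ 2 := by rw [Finset.mul_sum]
  calc frob (V * Δᵀ) ≤ Real.sqrt (c ^ 2 * ∑ i, ∑ j, (Δ i j) ^ 2) := Real.sqrt_le_sqrt h
    _ = c * frob Δ := by rw [Real.sqrt_mul (by positivity), Real.sqrt_sq hc]; rfl


lemma decomp {p r : ℕ} (U V : Matrix (Fin p) (Fin r) ℝ) :
    U * Uᵀ - V * Vᵀ = (U - V) * Vᵀ + (V * (U - V)ᵀ + (U - V) * (U - V)ᵀ) := by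
  simp only [Matrix.transpose_sub, Matrix.sub_mul, Matrix.mul_sub]
  abel

/-- If `E(U,U*) ≤ γ σ_r(X*)` with `0 < γ < 1`, where `X* = U*(U*)ᵀ` has rank `r`,
`s1 = σ₁(U*) = ‖U*‖₂` (pinned as the least nonnegative `c` with `‖U* x‖² ≤ c²‖x‖²`) and
`sr = σ_r(U*)` (so `σ_r(X*) = sr²`, pinned via `sr² = λ_min((U*)ᵀU*)`), then
`‖X − X*‖_F ≤ (2 + √γ) s1 √E(U,U*) ≤ (2√γ + γ) (s1/sr) σ_r(X*)`. -/
theorem stmt_2 {p r : ℕ} (U Ustar : Matrix (Fin p) (Fin r) ℝ) (γ s1 sr : ℝ)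
    (hγ0 : 0 < γ) (hγ1 : γ < 1)
    (hrank : (Ustar * Ustarᵀ).rank = r)
    (hs1 : IsLeast
      {c : ℝ | 0 ≤ c ∧ ∀ x : Fin r → ℝ,
        ∑ i, (Ustar.mulVec x i) ^ 2 ≤ c ^ 2 * (∑ j, (x j) ^ 2)} s1)
    (hsr : 0 < sr)
    (hsr2 : IsGreatest
      {c : ℝ | ∀ x : Fin r → ℝ, c * (∑ j, (x j) ^ 2) ≤ ∑ i, (Ustar.mulVec x i) ^ 2} (sr ^ 2))
    (hE : Edist U Ustar ≤ γ * sr ^ 2) :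
    frob (U * Uᵀ - Ustar * Ustarᵀ) ≤ (2 + Real.sqrt γ) * s1 * Real.sqrt (Edist U Ustar) ∧
      (2 + Real.sqrt γ) * s1 * Real.sqrt (Edist U Ustar) ≤
        (2 * Real.sqrt γ + γ) * (s1 / sr) * sr ^ 2 := by
  have hs1nn : 0 ≤ s1 := hs1.1.1
  have hγnn : 0 ≤ γ := hγ0.le
  -- r ≠ 0
  have hr : r ≠ 0 := by
    intro h
    subst h
    have h1 : (sr ^ 2 + 1) ∈
        {c : ℝ | ∀ x : Fin 0 → ℝ, c * (∑ j, (x j) ^ 2) ≤ ∑ i, (Ustar.mulVec x i) ^ 2} := by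
      intro x
      simp [Matrix.mulVec, dotProduct]
    linarith [hsr2.2 h1]
  -- sr ≤ s1
  have hsr_le : sr ≤ s1 := by
    obtain ⟨i0⟩ : Nonempty (Fin r) := ⟨⟨0, Nat.pos_of_ne_zero hr⟩⟩
    set x : Fin r → ℝ := fun j => if j = i0 then 1 else 0 with hxdef
    have hx : ∑ j, (x j) ^ 2 = 1 := by
      simp [hxdef, Finset.sum_ite_eq']
    have h1 := hsr2.1 x
    have h2 := hs1.1.2 x
    rw [hx] at h1 h2
    nlinarith [hsr.le]
  have hE0 : 0 ≤ Edist U Ustar := le_ciInf fun R => sq_nonneg _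
  -- key per-R bound
  have key : ∀ R : Matrix.orthogonalGroup (Fin r) ℝ,
      frob (U * Uᵀ - Ustar * Ustarᵀ) ≤
        2 * s1 * frob (U - Ustar * (R : Matrix (Fin r) (Fin r) ℝ)) +
          frob (U - Ustar * (R : Matrix (Fin r) (Fin r) ℝ)) ^ 2 := by
    intro R
    set Rm : Matrix (Fin r) (Fin r) ℝ := (R : Matrix (Fin r) (Fin r) ℝ) with hRm
    have hst : star Rm = Rmᵀ := by
      rw [Matrix.star_eq_conjTranspose, Matrix.conjTranspose_eq_transpose_of_trivial]
    have hR1 : Rmᵀ * Rm = 1 := by rw [← hst]; exact R.prop.1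
    have hR2 : Rm * Rmᵀ = 1 := by rw [← hst]; exact R.prop.2
    have hVV : (Ustar * Rm) * (Ustar * Rm)ᵀ = Ustar * Ustarᵀ := by
      rw [Matrix.transpose_mul]
      calc Ustar * Rm * (Rmᵀ * Ustarᵀ) = Ustar * (Rm * Rmᵀ) * Ustarᵀ := by
            rw [Matrix.mul_assoc, Matrix.mul_assoc, Matrix.mul_assoc]
        _ = Ustar * Ustarᵀ := by rw [hR2, Matrix.mul_one]
    have hVbound : ∀ x : Fin r → ℝ,
        ∑ i, ((Ustar * Rm).mulVec x i) ^ 2 ≤ s1 ^ 2 * ∑ j, (x j) ^ 2 := by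
      intro x
      have hmv : (Ustar * Rm).mulVec x = Ustar.mulVec (Rm.mulVec x) := by
        rw [Matrix.mulVec_mulVec]
      have hiso : ∑ j, (Rm.mulVec x j) ^ 2 = ∑ j, (x j) ^ 2 := by
        have hd : Rm.mulVec x ⬝ᵥ Rm.mulVec x = x ⬝ᵥ x := by
          rw [Matrix.dotProduct_mulVec]
          have h2 : Rm.mulVec x ᵥ* Rm = (Rmᵀ * Rm).mulVec x := by
            calc Rm.mulVec x ᵥ* Rm = Rm.mulVec x ᵥ* Rmᵀᵀ := by rw [Matrix.transpose_transpose]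
              _ = Rmᵀ.mulVec (Rm.mulVec x) := Matrix.vecMul_transpose _ _
              _ = (Rmᵀ * Rm).mulVec x := Matrix.mulVec_mulVec _ _ _
          rw [h2, hR1, Matrix.one_mulVec]
        simpa [dotProduct, pow_two] using hd
      rw [hmv]
      calc ∑ i, (Ustar.mulVec (Rm.mulVec x) i) ^ 2
          ≤ s1 ^ 2 * ∑ j, (Rm.mulVec x j) ^ 2 := hs1.1.2 _
        _ = s1 ^ 2 * ∑ j, (x j) ^ 2 := by rw [hiso]
    set D : Matrix (Fin p) (Fin r) ℝ := U - Ustar * Rm with hD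
    have b1 : frob (D * (Ustar * Rm)ᵀ) = frob ((Ustar * Rm) * Dᵀ) := by
      rw [← frob_transpose (D * (Ustar * Rm)ᵀ), Matrix.transpose_mul,
        Matrix.transpose_transpose]
    have b2 : frob ((Ustar * Rm) * Dᵀ) ≤ s1 * frob D :=
      frob_op_mul_le (Ustar * Rm) D s1 hs1nn hVbound
    have b3 : frob (D * Dᵀ) ≤ frob D ^ 2 := by
      calc frob (D * Dᵀ) ≤ frob D * frob Dᵀ := frob_mul_le _ _
        _ = frob D ^ 2 := by rw [frob_transpose, sq]
    calc frob (U * Uᵀ - Ustar * Ustarᵀ)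
        = frob (D * (Ustar * Rm)ᵀ + ((Ustar * Rm) * Dᵀ + D * Dᵀ)) := by
          rw [hD, ← hVV, decomp]
      _ ≤ frob (D * (Ustar * Rm)ᵀ) + (frob ((Ustar * Rm) * Dᵀ) + frob (D * Dᵀ)) :=
          le_trans (frob_add_le _ _) (by gcongr; exact frob_add_le _ _)
      _ ≤ s1 * frob D + (s1 * frob D + frob D ^ 2) := by
          rw [b1]; gcongr
      _ = 2 * s1 * frob D + frob D ^ 2 := by ring
  -- limit step
  set E := Edist U Ustar with hEdef
  have main : frob (U * Uᵀ - Ustar * Ustarᵀ) ≤ 2 * s1 * Real.sqrt E + E := by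
    have hcont : Tendsto (fun ε : ℝ => 2 * s1 * Real.sqrt (E + ε) + (E + ε)) (𝓝[>] (0:ℝ))
        (𝓝 (2 * s1 * Real.sqrt E + E)) := by
      have hc : ContinuousAt (fun ε : ℝ => 2 * s1 * Real.sqrt (E + ε) + (E + ε)) 0 := by
        have : Continuous (fun ε : ℝ => 2 * s1 * Real.sqrt (E + ε) + (E + ε)) := by
          continuity
        exact this.continuousAt
      have := hc.continuousWithinAt (s := Set.Ioi (0:ℝ))
      simpa using this.tendsto
    refine ge_of_tendsto hcont ?_
    filter_upwards [self_mem_nhdsWithin] with ε hε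
    have hεpos : (0:ℝ) < ε := hε
    have hlt : (⨅ R : Matrix.orthogonalGroup (Fin r) ℝ,
        (frob (U - Ustar * (R : Matrix (Fin r) (Fin r) ℝ))) ^ 2) < E + ε := by
      have : E < E + ε := lt_add_of_pos_right _ hεpos
      exact this
    obtain ⟨R, hR⟩ := exists_lt_of_ciInf_lt hlt
    have hfr : frob (U - Ustar * (R : Matrix (Fin r) (Fin r) ℝ)) ≤ Real.sqrt (E + ε) := by
      have h := Real.sqrt_le_sqrt hR.le
      rwa [Real.sqrt_sq (frob_nonneg _)] at h
    have hfn := frob_nonneg (U - Ustar * (R : Matrix (Fin r) (Fin r) ℝ))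
    calc frob (U * Uᵀ - Ustar * Ustarᵀ)
        ≤ 2 * s1 * frob (U - Ustar * (R : Matrix (Fin r) (Fin r) ℝ)) +
            frob (U - Ustar * (R : Matrix (Fin r) (Fin r) ℝ)) ^ 2 := key R
      _ ≤ 2 * s1 * Real.sqrt (E + ε) + (E + ε) := by nlinarith [hR.le]
  have hsE : Real.sqrt E ≤ Real.sqrt γ * sr := by
    have h := Real.sqrt_le_sqrt hE
    rwa [Real.sqrt_mul hγnn, Real.sqrt_sq hsr.le] at h
  have hEbound : E ≤ Real.sqrt γ * s1 * Real.sqrt E := by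
    have h1 : Real.sqrt E * Real.sqrt E = E := Real.mul_self_sqrt hE0
    have t1 : Real.sqrt E * Real.sqrt E ≤ (Real.sqrt γ * sr) * Real.sqrt E :=
      mul_le_mul_of_nonneg_right hsE (Real.sqrt_nonneg E)
    have t2 : (Real.sqrt γ * sr) * Real.sqrt E ≤ (Real.sqrt γ * s1) * Real.sqrt E := by
      apply mul_le_mul_of_nonneg_right _ (Real.sqrt_nonneg E)
      exact mul_le_mul_of_nonneg_left hsr_le (Real.sqrt_nonneg γ)
    calc E = Real.sqrt E * Real.sqrt E := h1.symm
      _ ≤ (Real.sqrt γ * sr) * Real.sqrt E := t1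
      _ ≤ (Real.sqrt γ * s1) * Real.sqrt E := t2
      _ = Real.sqrt γ * s1 * Real.sqrt E := by ring
  constructor
  · calc frob (U * Uᵀ - Ustar * Ustarᵀ) ≤ 2 * s1 * Real.sqrt E + E := main
      _ ≤ 2 * s1 * Real.sqrt E + Real.sqrt γ * s1 * Real.sqrt E := by linarith
      _ = (2 + Real.sqrt γ) * s1 * Real.sqrt E := by ring
  · have hγs : Real.sqrt γ * Real.sqrt γ = γ := Real.mul_self_sqrt hγnn
    calc (2 + Real.sqrt γ) * s1 * Real.sqrt E
        ≤ (2 + Real.sqrt γ) * s1 * (Real.sqrt γ * sr) := by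
          apply mul_le_mul_of_nonneg_left hsE (by positivity)
      _ = (2 * Real.sqrt γ + γ) * s1 * sr := by linear_combination s1 * sr * hγs
      _ = (2 * Real.sqrt γ + γ) * (s1 / sr) * sr ^ 2 := by
          have hx : s1 / sr * sr ^ 2 = s1 * sr := by field_simp [hsr.ne']
          rw [mul_assoc, mul_assoc, hx]
end
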